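/- Let $x_1 < \dots < x_n$ with $x_1 \geq 0$, probabilities $q_k \in (0,1)$ summing to 1, $\mu = \sum_k q_k x_k$, and for each $\lambda > 0$ let $x^*(\lambda)$ be the unique solution in $(x_n - \lambda, x_n)$ of $x^* = \lambda \sum_k \frac{q_k x_k}{\lambda + x^* - x_k}$. Then $x^*(\lambda) \to \mu$ as $\lambda \to \infty$. -/

import Mathlib

/-!
Subtracting `μ = ∑ q_k x_k` from the fixed-point equation gives
`x* - μ = ∑ q_k x_k (x_k - x*) / (λ + x* - x_k)`. The fixed point is nonnegative and below
`M = x_n`, so `|x_k - x*| ≤ M` and every denominator is at least `λ - M`; hence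
`|x* - μ| ≤ μ M / (λ - M)`, which tends to `0`.
-/

open Finset Filter Topology

section FixedPoint

variable {ι : Type*} [Fintype ι] {q x : ι → ℝ} {lam s : ℝ}

lemma sub_sum_mul_eq_of_eq_mul_sum (hden : ∀ k, lam + s - x k ≠ 0)
    (hs : s = lam * ∑ k, q k * x k / (lam + s - x k)) :
    s - ∑ k, q k * x k = ∑ k, q k * x k * (x k - s) / (lam + s - x k) := by
  nth_rewrite 1 [hs]
  rw [mul_sum, ← sum_sub_distrib]
  refine sum_congr rfl fun k _ => ?_
  have := hden k
  field_simp
  ring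

lemma nonneg_of_eq_mul_sum (hlam : 0 ≤ lam) (hq : ∀ k, 0 ≤ q k) (hx : ∀ k, 0 ≤ x k)
    (hden : ∀ k, 0 < lam + s - x k) (hs : s = lam * ∑ k, q k * x k / (lam + s - x k)) :
    0 ≤ s :=
  hs ▸ mul_nonneg hlam (sum_nonneg fun k _ =>
    div_nonneg (mul_nonneg (hq k) (hx k)) (hden k).le)

lemma abs_sub_sum_mul_le_of_eq_mul_sum {M : ℝ} (hM : M < lam) (hq : ∀ k, 0 ≤ q k)
    (hx : ∀ k, 0 ≤ x k) (hxM : ∀ k, x k ≤ M) (hs0 : 0 ≤ s) (hsM : s ≤ M)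
    (hs : s = lam * ∑ k, q k * x k / (lam + s - x k)) :
    |s - ∑ k, q k * x k| ≤ (∑ k, q k * x k) * M / (lam - M) := by
  have hden : ∀ k, 0 < lam + s - x k := fun k => by linarith [hxM k]
  rw [sub_sum_mul_eq_of_eq_mul_sum (fun k => (hden k).ne') hs, sum_mul, sum_div]
  refine (abs_sum_le_sum_abs _ _).trans (sum_le_sum fun k _ => ?_)
  have hqx : 0 ≤ q k * x k := mul_nonneg (hq k) (hx k)
  have hdiff : |x k - s| ≤ M := abs_le.2 ⟨by linarith [hx k], by linarith [hxM k]⟩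
  rw [abs_div, abs_mul, abs_of_nonneg hqx, abs_of_pos (hden k)]
  have hM0 : 0 ≤ M := (hx k).trans (hxM k)
  gcongr
  · linarith
  · exact hxM k

end FixedPoint

/-- As the redraw rate tends to infinity, the heritable-risk growth rate tends to
the mean. -/
theorem stmt_6 (n : ℕ) (hn : 2 ≤ n) (x q : Fin n → ℝ)
    (hx : StrictMono x) (hx0 : 0 ≤ x ⟨0, by omega⟩)
    (hq : ∀ k, q k ∈ Set.Ioo (0 : ℝ) 1)
    (xs : ℝ → ℝ)
    (hxs : ∀ lam : ℝ, 0 < lam →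
      xs lam ∈ Set.Ioo (x ⟨n - 1, by omega⟩ - lam) (x ⟨n - 1, by omega⟩) ∧
      xs lam = lam * ∑ k, q k * x k / (lam + xs lam - x k)) :
    Filter.Tendsto xs Filter.atTop (nhds (∑ k, q k * x k)) := by
  set M := x ⟨n - 1, by omega⟩
  set μ := ∑ k, q k * x k
  have hxk : ∀ k, 0 ≤ x k := fun k => hx0.trans (hx.monotone (Fin.mk_le_mk.2 (Nat.zero_le _)))
  have hxM : ∀ k, x k ≤ M := fun k => hx.monotone (Fin.mk_le_mk.2 (by omega))
  have hq0 : ∀ k, 0 ≤ q k := fun k => (hq k).1.le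
  have hbound : ∀ lam, M < lam → |xs lam - μ| ≤ μ * M / (lam - M) := by
    intro lam hlam
    have hlam0 : 0 < lam := (hxk _).trans_lt hlam
    obtain ⟨⟨hlow, hup⟩, hfix⟩ := hxs lam hlam0
    have hs0 := nonneg_of_eq_mul_sum hlam0.le hq0 hxk
      (fun k => by linarith [hxM k]) hfix
    exact abs_sub_sum_mul_le_of_eq_mul_sum hlam hq0 hxk hxM hs0 hup.le hfix
  have hrate : Tendsto (fun lam => μ * M / (lam - M)) atTop (𝓝 0) :=
    tendsto_const_nhds.div_atTop (tendsto_atTop_add_const_right _ (-M) tendsto_id)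
  refine tendsto_sub_nhds_zero_iff.1 (squeeze_zero_norm' ?_ hrate)
  filter_upwards [eventually_gt_atTop M] with lam hlam
  exact hbound lam hlam
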